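/- arXiv:1509.00759 — 3 statements merged into one kernel-verified Lean document; each statement's English description precedes it below -/
import Mathlib

section
/- Let $h$ be the probability generating function of a critical offspring distribution with mean 1 and finite positive variance $2b$, and let $h_n$ denote its iterates. Assume Kolmogorov's asymptotic $1 - h_n(0) \sim (bn)^{-1}$ as $n \to \infty$. Fix $\lambda > 0$, let $k = k(n) \to \infty$ with $k = o(n)$, set $s = s(n) = \exp(-\lambda/(b k))$, and let $m = n - k$. If additionally the local asymptotic $h_{j+1}(0) - h_j(0) \sim (b j^2)^{-1}$ holds as $j \to \infty$, then $\lim_{n\to\infty} \frac{b \lambda n^2}{k} (h_m(s) - h_m(0)) = 1$. -/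
open Filter Topology Set

/-!
Write `g i = h^[i] 0` and `m = n - k`. Since `h^[m]` is monotone on `[0, 1]` and
`h^[m] (g j) = g (m + j)`, it suffices to trap `s` between `g j₋` and `g j₊` with
`j± ≈ c± k / λ` and `c₋ < 1 < c₊` arbitrarily close to `1`. This is possible because
`1 - s ∼ λ / (b k)`, while Kolmogorov's asymptotic gives `1 - g j ∼ 1 / (b j)`. The local
asymptotic makes every increment of `g` on the short window `[m, m + j)` asymptotic to
`1 / (b m²)`, so `h^[m] s - g m` is squeezed between quantities asymptotic to `c± k / (λ b n²)`.
-/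

theorem MonotoneOn.iterate_of_mapsTo {α : Type*} [Preorder α] {f : α → α} {s : Set α}
    (hf : MonotoneOn f s) (hs : MapsTo f s s) : ∀ n, MonotoneOn f^[n] s
  | 0 => monotoneOn_id
  | n + 1 => by
    rw [Function.iterate_succ]
    exact (hf.iterate_of_mapsTo hs n).comp hf hs

theorem Summable.of_tsum_ne_zero {ι α : Type*} [AddCommMonoid α] [TopologicalSpace α]
    {f : ι → α} (hf : ∑' i, f i ≠ 0) : Summable f :=
  by_contra fun hns => hf (tsum_eq_zero_of_not_summable hns)

section ProbabilityGeneratingFunction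

variable {h : ℝ → ℝ} {p : ℕ → ℝ}

theorem monotoneOn_of_eq_tsum_pow (hp : ∀ i, 0 ≤ p i) (hsum : Summable p)
    (hpgf : ∀ s ∈ Icc (0 : ℝ) 1, h s = ∑' i, p i * s ^ i) : MonotoneOn h (Icc 0 1) := by
  have hsummable : ∀ s ∈ Icc (0 : ℝ) 1, Summable fun i => p i * s ^ i := fun s hs =>
    hsum.of_nonneg_of_le (fun i => mul_nonneg (hp i) (pow_nonneg hs.1 i))
      (fun i => mul_le_of_le_one_right (hp i) (pow_le_one₀ hs.1 hs.2))
  intro s hs t ht hst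
  rw [hpgf s hs, hpgf t ht]
  exact (hsummable s hs).tsum_le_tsum
    (fun i => mul_le_mul_of_nonneg_left (pow_le_pow_left₀ hs.1 hst i) (hp i)) (hsummable t ht)

theorem mapsTo_Icc_of_eq_tsum_pow (hp : ∀ i, 0 ≤ p i) (hpsum : ∑' i, p i = 1)
    (hpgf : ∀ s ∈ Icc (0 : ℝ) 1, h s = ∑' i, p i * s ^ i) : MapsTo h (Icc 0 1) (Icc 0 1) := by
  have hsum : Summable p := .of_tsum_ne_zero (hpsum ▸ one_ne_zero)
  have h_one : h 1 = 1 := by simpa [hpgf 1 (right_mem_Icc.2 zero_le_one)] using hpsum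
  intro s hs
  refine ⟨?_, h_one ▸ monotoneOn_of_eq_tsum_pow hp hsum hpgf hs
    (right_mem_Icc.2 zero_le_one) hs.2⟩
  rw [hpgf s hs]
  exact tsum_nonneg fun i => mul_nonneg (hp i) (pow_nonneg hs.1 i)

end ProbabilityGeneratingFunction

theorem tendsto_one_sub_exp_neg_div :
    Tendsto (fun t : ℝ => (1 - Real.exp (-t)) / t) (𝓝[≠] 0) (𝓝 1) := by
  have hderiv : HasDerivAt (fun t => 1 - Real.exp (-t)) 1 0 := by
    simpa using ((Real.hasDerivAt_exp (-0)).comp 0 (hasDerivAt_neg 0)).const_sub 1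
  simpa [div_eq_inv_mul] using hderiv.tendsto_slope_zero

theorem sub_le_mul_of_forall_sub_le {g : ℕ → ℝ} {d : ℝ} {m : ℕ} :
    ∀ j : ℕ, (∀ i, m ≤ i → i < m + j → g (i + 1) - g i ≤ d) → g (m + j) - g m ≤ j * d
  | 0, _ => by simp
  | j + 1, hd => by
    have ih := sub_le_mul_of_forall_sub_le j fun i hmi hij => hd i hmi (by omega)
    have hlast := hd (m + j) (by omega) (by omega)
    rw [← add_assoc]
    push_cast
    linarith

theorem mul_le_sub_of_forall_le_sub {g : ℕ → ℝ} {d : ℝ} {m j : ℕ}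
    (hd : ∀ i, m ≤ i → i < m + j → d ≤ g (i + 1) - g i) : j * d ≤ g (m + j) - g m := by
  have := sub_le_mul_of_forall_sub_le (g := -g) (d := -d) j fun i hmi hij => by
    have := hd i hmi hij
    simp only [Pi.neg_apply]
    linarith
  simp only [Pi.neg_apply] at this
  linarith

theorem mul_div_sq_le_add_sub {g : ℕ → ℝ} {c : ℝ} {m : ℕ} (hc : 0 ≤ c) (hm : 0 < m)
    (hg : ∀ i, m ≤ i → c ≤ (i : ℝ) ^ 2 * (g (i + 1) - g i)) (j : ℕ) :
    j * (c / ((m : ℝ) + j) ^ 2) ≤ g (m + j) - g m := by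
  refine mul_le_sub_of_forall_le_sub fun i hmi hij => ?_
  have hi : (0 : ℝ) < i := by exact_mod_cast hm.trans_le hmi
  have hincr : 0 ≤ g (i + 1) - g i :=
    nonneg_of_mul_nonneg_right (hc.trans (hg i hmi)) (by positivity)
  have hi_le : (i : ℝ) ≤ m + j := by exact_mod_cast hij.le
  rw [div_le_iff₀ (by positivity)]
  calc c ≤ (i : ℝ) ^ 2 * (g (i + 1) - g i) := hg i hmi
    _ ≤ _ := by rw [mul_comm]; gcongr

theorem add_sub_le_mul_div_sq {g : ℕ → ℝ} {c : ℝ} {m : ℕ} (hc : 0 ≤ c) (hm : 0 < m)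
    (hg : ∀ i, m ≤ i → (i : ℝ) ^ 2 * (g (i + 1) - g i) ≤ c) (j : ℕ) :
    g (m + j) - g m ≤ j * (c / (m : ℝ) ^ 2) := by
  refine sub_le_mul_of_forall_sub_le j fun i hmi _ => ?_
  have hi : (m : ℝ) ≤ i := by exact_mod_cast hmi
  rw [le_div_iff₀ (by positivity)]
  rcases le_or_gt (g (i + 1) - g i) 0 with hincr | hincr
  · nlinarith
  · nlinarith [hg i hmi,
      mul_le_mul_of_nonneg_left (pow_le_pow_left₀ (Nat.cast_nonneg _) hi 2) hincr.le]

theorem tendsto_sq_div_mul_add_sub {g : ℕ → ℝ} {L : ℝ} (hL : 0 < L)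
    (hg : Tendsto (fun i : ℕ => (i : ℝ) ^ 2 * (g (i + 1) - g i)) atTop (𝓝 L))
    {m j : ℕ → ℕ} (hm : Tendsto m atTop atTop) (hj : ∀ᶠ n in atTop, j n ≠ 0)
    (hjm : Tendsto (fun n => (j n : ℝ) / m n) atTop (𝓝 0)) :
    Tendsto (fun n => (m n : ℝ) ^ 2 / j n * (g (m n + j n) - g (m n))) atTop (𝓝 L) := by
  refine tendsto_order.2 ⟨fun a ha => ?_, fun a ha => ?_⟩
  · obtain ⟨c, hac, hcL⟩ := exists_between (max_lt ha hL)
    have hc : 0 < c := (le_max_right a 0).trans_lt hac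
    obtain ⟨N, hN⟩ := eventually_atTop.1 (hg.eventually (eventually_ge_nhds hcL))
    have hbound : Tendsto (fun n => c * ((1 + (j n : ℝ) / m n)⁻¹) ^ 2) atTop (𝓝 c) := by
      simpa using (((hjm.const_add 1).inv₀ (by norm_num)).pow 2).const_mul c
    filter_upwards [hbound.eventually (lt_mem_nhds ((le_max_left a 0).trans_lt hac)),
      hm.eventually_ge_atTop (max N 1), hj] with n hlt hmN hj0
    have hm0 : 0 < m n := (le_max_right N 1).trans hmN
    have hj0 : (j n : ℝ) ≠ 0 := by exact_mod_cast hj0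
    calc a < c * ((1 + (j n : ℝ) / m n)⁻¹) ^ 2 := hlt
      _ = (m n : ℝ) ^ 2 / j n * (j n * (c / ((m n : ℝ) + j n) ^ 2)) := by field_simp
      _ ≤ _ := by
        gcongr
        exact mul_div_sq_le_add_sub hc.le hm0
          (fun i hi => hN i ((le_max_left N 1).trans (hmN.trans hi))) _
  · obtain ⟨c, hLc, hca⟩ := exists_between ha
    obtain ⟨N, hN⟩ := eventually_atTop.1 (hg.eventually (eventually_le_nhds hLc))
    filter_upwards [hm.eventually_ge_atTop (max N 1), hj] with n hmN hj0
    have hm0 : 0 < m n := (le_max_right N 1).trans hmN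
    have hj0 : (j n : ℝ) ≠ 0 := by exact_mod_cast hj0
    calc (m n : ℝ) ^ 2 / j n * (g (m n + j n) - g (m n))
        ≤ (m n : ℝ) ^ 2 / j n * (j n * (c / (m n : ℝ) ^ 2)) := by
          gcongr
          exact add_sub_le_mul_div_sq (hL.trans hLc).le hm0
            (fun i hi => hN i ((le_max_left N 1).trans (hmN.trans hi))) _
      _ = c := by field_simp
      _ < a := hca

theorem tendsto_sq_div_mul_tsub_add_sub {g : ℕ → ℝ} {L : ℝ} (hL : 0 < L)
    (hg : Tendsto (fun i : ℕ => (i : ℝ) ^ 2 * (g (i + 1) - g i)) atTop (𝓝 L))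
    {k j : ℕ → ℕ} (hk : Tendsto (fun n => (k n : ℝ) / n) atTop (𝓝 0)) {c : ℝ} (hc : 0 < c)
    (hjk : Tendsto (fun n => (j n : ℝ) / k n) atTop (𝓝 c)) :
    Tendsto (fun n : ℕ => (n : ℝ) ^ 2 / k n * (g (n - k n + j n) - g (n - k n)))
      atTop (𝓝 (c * L)) := by
  have hkn : ∀ᶠ n in atTop, k n ≤ n := by
    filter_upwards [hk.eventually (eventually_lt_nhds one_pos), eventually_gt_atTop 0]
      with n hlt hn
    have hn : (0 : ℝ) < n := by exact_mod_cast hn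
    exact_mod_cast ((div_lt_one hn).1 hlt).le
  have hmn : Tendsto (fun n : ℕ => ((n - k n : ℕ) : ℝ) / n) atTop (𝓝 1) := by
    have h1 : Tendsto (fun n => 1 - (k n : ℝ) / n) atTop (𝓝 1) := by
      simpa using tendsto_const_nhds.sub hk
    refine h1.congr' ?_
    filter_upwards [hkn, eventually_gt_atTop 0] with n hkn hn
    have hn : (n : ℝ) ≠ 0 := by positivity
    rw [Nat.cast_sub hkn]
    field_simp
  have hnm : Tendsto (fun n : ℕ => (n : ℝ) / (n - k n : ℕ)) atTop (𝓝 1) := by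
    simpa using hmn.inv₀ one_ne_zero
  have hm : Tendsto (fun n => n - k n) atTop atTop := by
    refine tendsto_natCast_atTop_iff.1
      ((hmn.pos_mul_atTop one_pos tendsto_natCast_atTop_atTop).congr' ?_)
    filter_upwards [eventually_gt_atTop 0] with n hn
    have hn : (n : ℝ) ≠ 0 := by positivity
    field_simp
  have hjk_pos : ∀ᶠ n in atTop, 0 < (j n : ℝ) / k n := hjk.eventually (lt_mem_nhds hc)
  have hj : ∀ᶠ n in atTop, j n ≠ 0 := by
    filter_upwards [hjk_pos] with n hpos h0
    simp [h0] at hpos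
  have hjm : Tendsto (fun n => (j n : ℝ) / (n - k n : ℕ)) atTop (𝓝 0) := by
    have h0 := (hjk.mul hk).mul hnm
    rw [mul_zero, zero_mul] at h0
    refine h0.congr' ?_
    filter_upwards [hjk_pos, eventually_gt_atTop 0] with n hpos hn
    have hk0 : (k n : ℝ) ≠ 0 := by rintro h0; simp [h0] at hpos
    have hn : (n : ℝ) ≠ 0 := by positivity
    field_simp
  have hprod := hjk.mul ((hnm.pow 2).mul (tendsto_sq_div_mul_add_sub hL hg hm hj hjm))
  rw [one_pow, one_mul] at hprod
  refine hprod.congr' ?_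
  filter_upwards [hjk_pos, hj, hm.eventually_gt_atTop 0] with n hpos hj0 hm0
  have hk0 : (k n : ℝ) ≠ 0 := by rintro h0; simp [h0] at hpos
  have hj0 : (j n : ℝ) ≠ 0 := by exact_mod_cast hj0
  have hm0 : ((n - k n : ℕ) : ℝ) ≠ 0 := by exact_mod_cast hm0.ne'
  field_simp

theorem tendsto_mul_apply_of_tendsto_natCast_mul {u : ℕ → ℝ} {L : ℝ}
    (hu : Tendsto (fun i : ℕ => (i : ℝ) * u i) atTop (𝓝 L)) {j : ℕ → ℕ} {y : ℕ → ℝ} {c : ℝ}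
    (hj : Tendsto j atTop atTop) (hjy : Tendsto (fun n => (j n : ℝ) / y n) atTop (𝓝 c))
    (hc : c ≠ 0) : Tendsto (fun n => y n * u (j n)) atTop (𝓝 (L / c)) := by
  refine ((hu.comp hj).div hjy hc).congr' ?_
  filter_upwards [hj.eventually_gt_atTop 0, hjy.eventually_ne hc] with n hj0 hjy0
  have hj0 : (j n : ℝ) ≠ 0 := by positivity
  have hy0 : y n ≠ 0 := by rintro h0; simp [h0] at hjy0
  rw [Pi.div_apply, Function.comp_apply]
  field_simp

theorem tendsto_mul_one_sub_exp_neg_inv {x : ℕ → ℝ} (hx : Tendsto x atTop atTop) :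
    Tendsto (fun n => x n * (1 - Real.exp (-(x n)⁻¹))) atTop (𝓝 1) := by
  have hinv : Tendsto (fun n => (x n)⁻¹) atTop (𝓝[≠] 0) :=
    (tendsto_inv_atTop_nhdsGT_zero.comp hx).mono_right (nhdsGT_le_nhdsNE 0)
  exact (tendsto_one_sub_exp_neg_div.comp hinv).congr fun n => by
    simp [div_eq_mul_inv, mul_comm]

theorem eventually_le_of_tendsto_mul_one_sub {l : Filter ℕ} {w u v : ℕ → ℝ} {a a' : ℝ}
    (hw : ∀ n, 0 ≤ w n) (hu : Tendsto (fun n => w n * (1 - u n)) l (𝓝 a))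
    (hv : Tendsto (fun n => w n * (1 - v n)) l (𝓝 a')) (ha : a < a') :
    ∀ᶠ n in l, v n ≤ u n := by
  filter_upwards [hu.eventually_lt hv ha] with n hlt
  linarith [lt_of_mul_lt_mul_left hlt (hw n)]

theorem tendsto_apply_of_monotoneOn_of_squeeze {F : ℕ → ℝ → ℝ} {S : Set ℝ} {L : ℝ}
    (hL : 0 < L) (hF : ∀ n, MonotoneOn (F n) S) {s : ℕ → ℝ} (hs : ∀ n, s n ∈ S)
    {t : ℝ → ℕ → ℝ} (ht : ∀ c n, t c n ∈ S)
    (hFt : ∀ c > 0, Tendsto (fun n => F n (t c n)) atTop (𝓝 c))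
    (hlow : ∀ c ∈ Ioo 0 L, ∀ᶠ n in atTop, t c n ≤ s n)
    (hup : ∀ c > L, ∀ᶠ n in atTop, s n ≤ t c n) :
    Tendsto (fun n => F n (s n)) atTop (𝓝 L) := by
  refine tendsto_order.2 ⟨fun a ha => ?_, fun a ha => ?_⟩
  · obtain ⟨c, hac, hcL⟩ := exists_between (max_lt ha hL)
    have hc : 0 < c := (le_max_right a 0).trans_lt hac
    filter_upwards [(hFt c hc).eventually (lt_mem_nhds ((le_max_left a 0).trans_lt hac)),
      hlow c ⟨hc, hcL⟩] with n hlt hle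
    exact hlt.trans_le (hF n (ht c n) (hs n) hle)
  · obtain ⟨c, hLc, hca⟩ := exists_between ha
    have hc : 0 < c := hL.trans hLc
    filter_upwards [(hFt c hc).eventually (gt_mem_nhds hca), hup c hLc] with n hlt hle
    exact (hF n (hs n) (ht c n) hle).trans_lt hlt

theorem Lemma_L_Diff1_general
    (h : ℝ → ℝ) (p : ℕ → ℝ) (b lam : ℝ) (k : ℕ → ℕ)
    (hb : 0 < b) (hlam : 0 < lam)
    (hp : ∀ i, 0 ≤ p i) (hpsum : ∑' i : ℕ, p i = 1)
    (hpgf : ∀ s ∈ Set.Icc (0:ℝ) 1, h s = ∑' i : ℕ, p i * s ^ i)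
    (hk : Filter.Tendsto k Filter.atTop Filter.atTop)
    (hko : Filter.Tendsto (fun n : ℕ => (k n : ℝ) / n) Filter.atTop (nhds 0))
    (hKolm : Filter.Tendsto (fun n : ℕ => b * n * (1 - h^[n] 0))
      Filter.atTop (nhds 1))
    (hlocal : Filter.Tendsto
      (fun j : ℕ => b * (j : ℝ) ^ 2 * (h^[j + 1] 0 - h^[j] 0))
      Filter.atTop (nhds 1)) :
    Filter.Tendsto
      (fun n : ℕ =>
        b * lam * (n : ℝ) ^ 2 / (k n) *
          (h^[n - k n] (Real.exp (-lam / (b * k n))) - h^[n - k n] 0))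
      Filter.atTop (nhds 1) := by
  have hmaps := mapsTo_Icc_of_eq_tsum_pow hp hpsum hpgf
  have hsum : Summable p := .of_tsum_ne_zero (hpsum ▸ one_ne_zero)
  have hiter := (monotoneOn_of_eq_tsum_pow hp hsum hpgf).iterate_of_mapsTo hmaps
  set y : ℕ → ℝ := fun n => k n / lam with hy_def
  have hy : Tendsto y atTop atTop := (tendsto_natCast_atTop_atTop.comp hk).atTop_div_const hlam
  set j : ℝ → ℕ → ℕ := fun c n => ⌊c * y n⌋₊
  have hjy (c : ℝ) (hc : 0 < c) : Tendsto (fun n => (j c n : ℝ) / y n) atTop (𝓝 c) :=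
    (tendsto_nat_floor_mul_div_atTop hc.le).comp hy
  have hwindow (c : ℝ) (hc : 0 < c) : Tendsto (fun n : ℕ => b * lam * (n : ℝ) ^ 2 / k n *
      (h^[n - k n] (h^[j c n] 0) - h^[n - k n] 0)) atTop (𝓝 c) := by
    have hjk : Tendsto (fun n => (j c n : ℝ) / k n) atTop (𝓝 (c / lam)) :=
      ((hjy c hc).div_const lam).congr fun n => by simp only [hy_def]; field_simp
    have := (tendsto_sq_div_mul_tsub_add_sub (g := fun i => b * h^[i] 0) one_pos
      (hlocal.congr fun i => by ring) hko (div_pos hc hlam) hjk).const_mul lam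
    rw [mul_one, mul_div_cancel₀ _ hlam.ne'] at this
    exact this.congr fun n => by rw [← Function.iterate_add_apply]; ring
  have hs : Tendsto (fun n => b * y n * (1 - Real.exp (-lam / (b * k n)))) atTop (𝓝 1) :=
    (tendsto_mul_one_sub_exp_neg_inv (hy.const_mul_atTop hb)).congr fun n => by
      simp only [hy_def]; field_simp
  have hgj (c : ℝ) (hc : 0 < c) :
      Tendsto (fun n => b * y n * (1 - h^[j c n] 0)) atTop (𝓝 c⁻¹) := by
    have := tendsto_mul_apply_of_tendsto_natCast_mul
      (u := fun i => b * (1 - h^[i] 0)) (j := j c) (hKolm.congr fun i => by ring)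
      (tendsto_nat_floor_atTop.comp (hy.const_mul_atTop hc)) (hjy c hc) hc.ne'
    rw [one_div] at this
    exact this.congr fun n => by ring
  have hw (n : ℕ) : 0 ≤ b * y n := by positivity
  refine tendsto_apply_of_monotoneOn_of_squeeze
    (F := fun n t => b * lam * (n : ℝ) ^ 2 / k n * (h^[n - k n] t - h^[n - k n] 0))
    (s := fun n => Real.exp (-lam / (b * k n))) (t := fun c n => h^[j c n] 0) (S := Icc 0 1)
    one_pos
    (fun n u hu v hv huv => by dsimp only; gcongr; exact hiter _ hu hv huv)
    (fun n => ⟨(Real.exp_pos _).le, Real.exp_le_one_iff.2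
      (div_nonpos_of_nonpos_of_nonneg (by linarith) (by positivity))⟩)
    (fun c n => hmaps.iterate _ ⟨le_rfl, zero_le_one⟩) hwindow
    (fun c hc => eventually_le_of_tendsto_mul_one_sub hw hs (hgj c hc.1)
      ((one_lt_inv₀ hc.1).2 hc.2))
    (fun c hc => eventually_le_of_tendsto_mul_one_sub hw (hgj c (one_pos.trans hc)) hs
      ((inv_lt_one₀ (one_pos.trans hc)).2 hc))

theorem Lemma_L_Diff1
    (h : ℝ → ℝ) (p : ℕ → ℝ) (b lam : ℝ) (k : ℕ → ℕ)
    (hb : 0 < b) (hlam : 0 < lam)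
    (hp : ∀ i, 0 ≤ p i) (hpsum : ∑' i : ℕ, p i = 1)
    (hpgf : ∀ s ∈ Set.Icc (0:ℝ) 1, h s = ∑' i : ℕ, p i * s ^ i)
    (hmean : ∑' i : ℕ, (i : ℝ) * p i = 1)
    (hvar : (∑' i : ℕ, (i : ℝ) ^ 2 * p i) - 1 = 2 * b)
    (hk : Filter.Tendsto k Filter.atTop Filter.atTop)
    (hko : Filter.Tendsto (fun n : ℕ => (k n : ℝ) / n) Filter.atTop (nhds 0))
    (hKolm : Filter.Tendsto (fun n : ℕ => b * n * (1 - h^[n] 0))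
      Filter.atTop (nhds 1))
    (hlocal : Filter.Tendsto
      (fun j : ℕ => b * (j : ℝ) ^ 2 * (h^[j + 1] 0 - h^[j] 0))
      Filter.atTop (nhds 1)) :
    Filter.Tendsto
      (fun n : ℕ =>
        b * lam * (n : ℝ) ^ 2 / (k n) *
          (h^[n - k n] (Real.exp (-lam / (b * k n))) - h^[n - k n] 0))
      Filter.atTop (nhds 1) :=
  Lemma_L_Diff1_general h p b lam k hb hlam hp hpsum hpgf hk hko hKolm hlocal
end

section
/- Let $W \ge 0$ be a random variable with $1 - E[e^{-\theta W}] \sim D \theta^{\gamma}$ as $\theta \downarrow 0$, where $D > 0$ and $\gamma \in (0,1)$. Then for every $\lambda > 0$ and $b>0$, $\lim_{n \to \infty} n^{\gamma - 1} E\big[ W e^{-\lambda W/(bn)} \big] = \frac{\gamma\, b\, D\, (1/b)^{\gamma}}{\lambda^{1-\gamma}}$ (in particular the expectations are finite for each $n$). -/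
open Filter Topology MeasureTheory

/-!
Put `F θ = 1 - E[exp (-θ W)]` and `G θ = E[W exp (-θ W)]`. Convexity of `exp` makes `G t` a
supergradient of `F` at `t`: `(t - s) G t ≤ F t - F s` for all `s, t > 0`. Comparing
`F (a θ) - F θ` with `(a - 1) θ G θ` for `a` slightly above and slightly below `1` squeezes
`G θ / θ ^ (γ - 1)` between quantities tending to `D (a ^ γ - 1) / (a - 1)` as `θ ↓ 0`, and these
tend to `γ D` as `a → 1`. The theorem is the substitution `θ = λ / (b n)`.
-/

theorem tendsto_rpow_sub_one_div_sub_one (γ : ℝ) :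
    Tendsto (fun x : ℝ => (x ^ γ - 1) / (x - 1)) (𝓝[≠] 1) (𝓝 γ) := by
  have hderiv := hasDerivAt_iff_tendsto_slope.mp
    (Real.hasDerivAt_rpow_const (p := γ) (x := 1) (Or.inl one_ne_zero))
  rw [Real.one_rpow, mul_one] at hderiv
  exact hderiv.congr fun x => by rw [slope_def_field, Real.one_rpow]

theorem tendsto_of_eventually_bounds_tendsto {ι α β : Type*} [LinearOrder β] [TopologicalSpace β]
    [OrderTopology β] {l : Filter α} {la lb : Filter ι} [la.NeBot] [lb.NeBot] {f : α → β}
    {q : ι → α → β} {r : ι → β} {x : β} (hla : Tendsto r la (𝓝 x)) (hlb : Tendsto r lb (𝓝 x))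
    (hlower : ∀ᶠ i in la, Tendsto (q i) l (𝓝 (r i)) ∧ ∀ᶠ y in l, q i y ≤ f y)
    (hupper : ∀ᶠ i in lb, Tendsto (q i) l (𝓝 (r i)) ∧ ∀ᶠ y in l, f y ≤ q i y) :
    Tendsto f l (𝓝 x) := by
  refine tendsto_order.2 ⟨fun c hc => ?_, fun c hc => ?_⟩
  · obtain ⟨i, hci, hqi, hle⟩ := ((hla.eventually (eventually_gt_nhds hc)).and hlower).exists
    filter_upwards [hqi.eventually (eventually_gt_nhds hci), hle] with y hcq hqf
    exact hcq.trans_le hqf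
  · obtain ⟨i, hci, hqi, hle⟩ := ((hlb.eventually (eventually_lt_nhds hc)).and hupper).exists
    filter_upwards [hqi.eventually (eventually_lt_nhds hci), hle] with y hqc hfq
    exact hfq.trans_lt hqc

section Supergradient

variable {F G : ℝ → ℝ} {γ : ℝ}

theorem tendsto_increment_div_rpow {L a : ℝ}
    (hF : Tendsto (fun θ => F θ / θ ^ γ) (𝓝[>] 0) (𝓝 L)) (ha : 0 < a) :
    Tendsto (fun θ => (F (a * θ) - F θ) / ((a - 1) * θ ^ γ)) (𝓝[>] 0)
      (𝓝 (L * ((a ^ γ - 1) / (a - 1)))) := by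
  have hscaled : Tendsto (fun θ => F (a * θ) / (a * θ) ^ γ) (𝓝[>] 0) (𝓝 L) :=
    hF.comp (tendsto_comap.mono_left (comap_mulLeft_nhdsGT_zero ha).ge)
  have hlim := ((hscaled.const_mul (a ^ γ)).sub hF).div_const (a - 1)
  rw [show (a ^ γ * L - L) / (a - 1) = L * ((a ^ γ - 1) / (a - 1)) by ring] at hlim
  refine hlim.congr' ?_
  filter_upwards [self_mem_nhdsWithin] with θ (hθ : 0 < θ)
  have hcancel : a ^ γ * (F (a * θ) / (a * θ) ^ γ) = F (a * θ) / θ ^ γ := by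
    have := (Real.rpow_pos_of_pos ha γ).ne'
    rw [Real.mul_rpow ha.le hθ.le]
    field_simp
  rw [hcancel, div_sub_div_same, div_div, mul_comm (θ ^ γ)]

theorem increment_div_rpow_le {a θ : ℝ} (ha : 1 < a) (hθ : 0 < θ)
    (h : (θ - a * θ) * G θ ≤ F θ - F (a * θ)) :
    (F (a * θ) - F θ) / ((a - 1) * θ ^ γ) ≤ G θ / θ ^ (γ - 1) := by
  have hθγ := Real.rpow_pos_of_pos hθ γ
  rw [Real.rpow_sub_one hθ.ne', div_div_eq_mul_div, div_le_div_iff₀ (by nlinarith) hθγ]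
  nlinarith

theorem le_increment_div_rpow {a θ : ℝ} (ha : a < 1) (hθ : 0 < θ)
    (h : (θ - a * θ) * G θ ≤ F θ - F (a * θ)) :
    G θ / θ ^ (γ - 1) ≤ (F (a * θ) - F θ) / ((a - 1) * θ ^ γ) := by
  have hθγ := Real.rpow_pos_of_pos hθ γ
  rw [Real.rpow_sub_one hθ.ne', div_div_eq_mul_div, ← neg_div_neg_eq (F (a * θ) - F θ),
    div_le_div_iff₀ hθγ (by nlinarith)]
  nlinarith

theorem tendsto_div_rpow_sub_one_of_supergradient {L : ℝ}
    (hF : Tendsto (fun θ => F θ / θ ^ γ) (𝓝[>] 0) (𝓝 L))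
    (hG : ∀ s t, 0 < s → 0 < t → (t - s) * G t ≤ F t - F s) :
    Tendsto (fun θ => G θ / θ ^ (γ - 1)) (𝓝[>] 0) (𝓝 (L * γ)) := by
  have hr := (tendsto_rpow_sub_one_div_sub_one γ).const_mul L
  refine tendsto_of_eventually_bounds_tendsto
    (q := fun a θ => (F (a * θ) - F θ) / ((a - 1) * θ ^ γ)) (hr.mono_left (nhdsGT_le_nhdsNE 1))
    (hr.mono_left (nhdsLT_le_nhdsNE 1)) ?_ ?_
  · filter_upwards [self_mem_nhdsWithin] with a (ha : 1 < a)
    refine ⟨tendsto_increment_div_rpow hF (by linarith), ?_⟩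
    filter_upwards [self_mem_nhdsWithin] with θ (hθ : 0 < θ)
    exact increment_div_rpow_le ha hθ (hG _ _ (by positivity) hθ)
  · filter_upwards [Ioo_mem_nhdsLT zero_lt_one] with a ⟨ha0, ha1⟩
    refine ⟨tendsto_increment_div_rpow hF ha0, ?_⟩
    filter_upwards [self_mem_nhdsWithin] with θ (hθ : 0 < θ)
    exact le_increment_div_rpow ha1 hθ (hG _ _ (by positivity) hθ)

end Supergradient

theorem mul_exp_le_exp_sub_exp (u v : ℝ) : (v - u) * Real.exp u ≤ Real.exp v - Real.exp u :=
  calc (v - u) * Real.exp u = (v - u + 1) * Real.exp u - Real.exp u := by ring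
    _ ≤ Real.exp (v - u) * Real.exp u - Real.exp u := by gcongr; exact Real.add_one_le_exp _
    _ = Real.exp v - Real.exp u := by rw [← Real.exp_add, sub_add_cancel]

section Laplace

variable {Ω : Type*} [MeasurableSpace Ω] {μ : Measure Ω} [IsFiniteMeasure μ] {W : Ω → ℝ}

theorem integrable_exp_neg_mul (hW : Measurable W) (hW0 : ∀ ω, 0 ≤ W ω) {θ : ℝ} (hθ : 0 ≤ θ) :
    Integrable (fun ω => Real.exp (-θ * W ω)) μ := by
  refine (integrable_const 1).mono' (by fun_prop : Measurable _).aestronglyMeasurable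
    (ae_of_all _ fun ω => ?_)
  rw [Real.norm_of_nonneg (Real.exp_pos _).le, Real.exp_le_one_iff]
  nlinarith [hW0 ω]

theorem integrable_mul_exp_neg_mul (hW : Measurable W) (hW0 : ∀ ω, 0 ≤ W ω) {θ : ℝ} (hθ : 0 < θ) :
    Integrable (fun ω => W ω * Real.exp (-θ * W ω)) μ := by
  refine (integrable_const (Real.exp (-1) / θ)).mono'
    (by fun_prop : Measurable _).aestronglyMeasurable (ae_of_all _ fun ω => ?_)
  rw [Real.norm_of_nonneg (mul_nonneg (hW0 ω) (Real.exp_pos _).le), le_div_iff₀ hθ]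
  calc W ω * Real.exp (-θ * W ω) * θ = θ * W ω * Real.exp (-(θ * W ω)) := by ring_nf
    _ ≤ Real.exp (-1) := Real.mul_exp_neg_le_exp_neg_one _

theorem laplace_supergradient (hW : Measurable W) (hW0 : ∀ ω, 0 ≤ W ω) {s t : ℝ}
    (hs : 0 ≤ s) (ht : 0 < t) :
    (t - s) * ∫ ω, W ω * Real.exp (-t * W ω) ∂μ
      ≤ (1 - ∫ ω, Real.exp (-t * W ω) ∂μ) - (1 - ∫ ω, Real.exp (-s * W ω) ∂μ) := by
  rw [sub_sub_sub_cancel_left, ← integral_sub (integrable_exp_neg_mul hW hW0 hs)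
    (integrable_exp_neg_mul hW hW0 ht.le), ← integral_const_mul]
  refine integral_mono ((integrable_mul_exp_neg_mul hW hW0 ht).const_mul _)
    ((integrable_exp_neg_mul hW hW0 hs).sub (integrable_exp_neg_mul hW hW0 ht.le)) fun ω => ?_
  calc (t - s) * (W ω * Real.exp (-t * W ω))
      = (-s * W ω - -t * W ω) * Real.exp (-t * W ω) := by ring
    _ ≤ _ := mul_exp_le_exp_sub_exp _ _

end Laplace

theorem Lemma_L_Diff2_abstract_general
    {Ω : Type*} [MeasurableSpace Ω] (μ : Measure Ω) [IsProbabilityMeasure μ]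
    (W : Ω → ℝ) (D γ : ℝ)
    (hD : 0 < D)
    (hmeas : Measurable W) (hnonneg : ∀ ω, 0 ≤ W ω)
    (hlaplace : Filter.Tendsto
      (fun θ : ℝ => (1 - ∫ ω, Real.exp (-θ * W ω) ∂μ) / (D * θ ^ γ))
      (nhdsWithin 0 (Set.Ioi 0)) (nhds 1)) :
    ∀ lam b : ℝ, 0 < lam → 0 < b →
      (∀ n : ℕ, 1 ≤ n →
        Integrable (fun ω => W ω * Real.exp (-(lam / (b * n)) * W ω)) μ) ∧
      Filter.Tendsto
        (fun n : ℕ =>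
          (n : ℝ) ^ (γ - 1) * ∫ ω, W ω * Real.exp (-(lam / (b * n)) * W ω) ∂μ)
        Filter.atTop (nhds (γ * b * D * (1 / b) ^ γ / lam ^ (1 - γ))) := by
  intro lam b hlam hb
  have hF : Tendsto (fun θ => (1 - ∫ ω, Real.exp (-θ * W ω) ∂μ) / θ ^ γ) (𝓝[>] 0) (𝓝 D) := by
    refine (mul_one D ▸ hlaplace.const_mul D).congr fun θ => ?_
    rw [← mul_div_assoc, mul_div_mul_left _ _ hD.ne']
  have hG := tendsto_div_rpow_sub_one_of_supergradient hF
    fun s t hs ht => laplace_supergradient (μ := μ) hmeas hnonneg hs.le ht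
  have hθ : ∀ n : ℕ, 1 ≤ n → 0 < lam / (b * n) := fun n hn => by positivity
  have hθlim : Tendsto (fun n : ℕ => lam / (b * n)) atTop (𝓝[>] 0) :=
    tendsto_nhdsWithin_iff.2 ⟨tendsto_const_nhds.div_atTop
      (tendsto_natCast_atTop_atTop.const_mul_atTop hb), eventually_atTop.2 ⟨1, hθ⟩⟩
  refine ⟨fun n hn => integrable_mul_exp_neg_mul hmeas hnonneg (hθ n hn), ?_⟩
  have hlim := (hG.comp hθlim).mul_const ((lam / b) ^ (γ - 1))
  have hvalue : D * γ * (lam / b) ^ (γ - 1) = γ * b * D * (1 / b) ^ γ / lam ^ (1 - γ) := by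
    rw [Real.div_rpow hlam.le hb.le, Real.div_rpow zero_le_one hb.le, Real.one_rpow,
      Real.rpow_sub_one hb.ne', Real.rpow_sub_one hlam.ne', Real.rpow_sub hlam, Real.rpow_one]
    field_simp
  rw [hvalue] at hlim
  refine hlim.congr' ?_
  filter_upwards [eventually_ge_atTop 1] with n hn
  have := (Real.rpow_pos_of_pos (hθ n hn) (γ - 1)).ne'
  have hn0 : (0 : ℝ) < n := by exact_mod_cast hn
  rw [Function.comp_apply, show lam / b = lam / (b * n) * n by field_simp,
    Real.mul_rpow (hθ n hn).le hn0.le, ← mul_assoc, div_mul_cancel₀ _ this, mul_comm]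

theorem Lemma_L_Diff2_abstract
    {Ω : Type*} [MeasurableSpace Ω] (μ : Measure Ω) [IsProbabilityMeasure μ]
    (W : Ω → ℝ) (D γ : ℝ)
    (hD : 0 < D) (hγ : γ ∈ Set.Ioo (0:ℝ) 1)
    (hmeas : Measurable W) (hnonneg : ∀ ω, 0 ≤ W ω)
    (hlaplace : Filter.Tendsto
      (fun θ : ℝ => (1 - ∫ ω, Real.exp (-θ * W ω) ∂μ) / (D * θ ^ γ))
      (nhdsWithin 0 (Set.Ioi 0)) (nhds 1)) :
    ∀ lam b : ℝ, 0 < lam → 0 < b →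
      (∀ n : ℕ, 1 ≤ n →
        Integrable (fun ω => W ω * Real.exp (-(lam / (b * n)) * W ω)) μ) ∧
      Filter.Tendsto
        (fun n : ℕ =>
          (n : ℝ) ^ (γ - 1) * ∫ ω, W ω * Real.exp (-(lam / (b * n)) * W ω) ∂μ)
        Filter.atTop (nhds (γ * b * D * (1 / b) ^ γ / lam ^ (1 - γ))) :=
  Lemma_L_Diff2_abstract_general μ W D γ hD hmeas hnonneg hlaplace
end

section
/- Let $h$ be the pgf of a critical offspring distribution with iterates $h_n$, and suppose the limit $U(s) = \lim_{n\to\infty} b n^2 (h_n(s) - h_n(0))$ exists for each $s \in [0,1)$, where $b > 0$. Assume also the local limit asymptotic $h_{n+1}(0) - h_n(0) \sim 1/(bn^2)$. Then $U$ satisfies the functional equation $U(h(s)) = U(s) + 1$ for all $s \in [0,1)$. -/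
open Filter Topology

theorem tsum_mul_pow_lt_tsum {p : ℕ → ℝ} (hp : ∀ i, 0 ≤ p i) (hpS : Summable p)
    {i : ℕ} (hi : i ≠ 0) (hpi : 0 < p i) {s : ℝ} (hs0 : 0 ≤ s) (hs1 : s < 1) :
    ∑' j, p j * s ^ j < ∑' j, p j := by
  refine Summable.tsum_lt_tsum_of_nonneg (i := i) (fun j => mul_nonneg (hp j) (pow_nonneg hs0 j))
    (fun j => mul_le_of_le_one_right (hp j) (pow_le_one₀ hs0 hs1.le)) ?_ hpS
  exact mul_lt_of_lt_one_right hpi (pow_lt_one₀ hs0 hs1 hi)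

theorem tsum_mul_pow_mem_Ico {p : ℕ → ℝ} (hp : ∀ i, 0 ≤ p i) (hpsum : ∑' i, p i = 1)
    (hmean : ∑' i : ℕ, (i : ℝ) * p i ≠ 0) {s : ℝ} (hs : s ∈ Set.Ico (0 : ℝ) 1) :
    ∑' i, p i * s ^ i ∈ Set.Ico (0 : ℝ) 1 := by
  obtain ⟨hs0, hs1⟩ := hs
  have hpS : Summable p := by
    by_contra hnot
    simp [tsum_eq_zero_of_not_summable hnot] at hpsum
  obtain ⟨i, hi⟩ : ∃ i : ℕ, (i : ℝ) * p i ≠ 0 := by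
    by_contra! hzero
    simp [hzero] at hmean
  obtain ⟨hi0, hpi0⟩ := mul_ne_zero_iff.mp hi
  refine ⟨tsum_nonneg fun j => mul_nonneg (hp j) (pow_nonneg hs0 j), hpsum ▸ ?_⟩
  exact tsum_mul_pow_lt_tsum hp hpS (by exact_mod_cast hi0) ((hp i).lt_of_ne' hpi0) hs0 hs1

theorem Filter.Tendsto.natCast_sq_mul_comp_succ {u : ℕ → ℝ} {L : ℝ}
    (hu : Tendsto (fun n : ℕ => (n : ℝ) ^ 2 * u n) atTop (𝓝 L)) :
    Tendsto (fun n : ℕ => (n : ℝ) ^ 2 * u (n + 1)) atTop (𝓝 L) := by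
  have hlim := ((tendsto_natCast_div_add_atTop (1 : ℝ)).pow 2).mul
    (hu.comp (tendsto_add_atTop_nat 1))
  rw [one_pow, one_mul] at hlim
  refine hlim.congr fun n => ?_
  have : (n : ℝ) + 1 ≠ 0 := by positivity
  simp only [Function.comp_apply, Nat.cast_add, Nat.cast_one]
  field_simp

/-- Split `fⁿ (f s) - fⁿ 0` as `(fⁿ⁺¹ s - fⁿ⁺¹ 0) + (fⁿ⁺¹ 0 - fⁿ 0)`; the first term, rescaled
by `n²` instead of `(n + 1)²`, has the same limit as the sequence at `s`. -/
theorem limit_iterate_apply_eq_add_one (f : ℝ → ℝ) {b s x y : ℝ}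
    (hs : Tendsto (fun n : ℕ => b * (n : ℝ) ^ 2 * (f^[n] s - f^[n] 0)) atTop (𝓝 x))
    (hfs : Tendsto (fun n : ℕ => b * (n : ℝ) ^ 2 * (f^[n] (f s) - f^[n] 0)) atTop (𝓝 y))
    (hlocal : Tendsto (fun n : ℕ => b * (n : ℝ) ^ 2 * (f^[n + 1] 0 - f^[n] 0))
      atTop (𝓝 1)) :
    y = x + 1 := by
  have hshift : Tendsto (fun n : ℕ => b * (n : ℝ) ^ 2 * (f^[n + 1] s - f^[n + 1] 0))
      atTop (𝓝 x) := by
    have hs' : Tendsto (fun n : ℕ => (n : ℝ) ^ 2 * (b * (f^[n] s - f^[n] 0))) atTop (𝓝 x) :=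
      hs.congr fun n => by ring
    exact hs'.natCast_sq_mul_comp_succ.congr fun n => by ring
  refine tendsto_nhds_unique hfs ((hshift.add hlocal).congr fun n => ?_)
  rw [← Function.iterate_succ_apply]
  ring

theorem harmonic_functional_equation_general
    (h U : ℝ → ℝ) (p : ℕ → ℝ) (b : ℝ)
    (hp : ∀ i, 0 ≤ p i) (hpsum : ∑' i : ℕ, p i = 1)
    (hpgf : ∀ s ∈ Set.Icc (0:ℝ) 1, h s = ∑' i : ℕ, p i * s ^ i)
    (hmean : ∑' i : ℕ, (i : ℝ) * p i = 1)
    (hU : ∀ s ∈ Set.Ico (0:ℝ) 1,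
      Filter.Tendsto (fun n : ℕ => b * (n : ℝ) ^ 2 * (h^[n] s - h^[n] 0))
        Filter.atTop (nhds (U s)))
    (hlocal : Filter.Tendsto
      (fun n : ℕ => b * (n : ℝ) ^ 2 * (h^[n + 1] 0 - h^[n] 0))
      Filter.atTop (nhds 1)) :
    ∀ s ∈ Set.Ico (0:ℝ) 1, U (h s) = U s + 1 := by
  intro s hs
  have hhs : h s ∈ Set.Ico (0 : ℝ) 1 := by
    rw [hpgf s (Set.Ico_subset_Icc_self hs)]
    exact tsum_mul_pow_mem_Ico hp hpsum (hmean ▸ one_ne_zero) hs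
  exact limit_iterate_apply_eq_add_one h (hU s hs) (hU (h s) hhs) hlocal

theorem harmonic_functional_equation
    (h U : ℝ → ℝ) (p : ℕ → ℝ) (b : ℝ) (hb : 0 < b)
    (hp : ∀ i, 0 ≤ p i) (hpsum : ∑' i : ℕ, p i = 1)
    (hpgf : ∀ s ∈ Set.Icc (0:ℝ) 1, h s = ∑' i : ℕ, p i * s ^ i)
    (hmean : ∑' i : ℕ, (i : ℝ) * p i = 1)
    (hU : ∀ s ∈ Set.Ico (0:ℝ) 1,
      Filter.Tendsto (fun n : ℕ => b * (n : ℝ) ^ 2 * (h^[n] s - h^[n] 0))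
        Filter.atTop (nhds (U s)))
    (hlocal : Filter.Tendsto
      (fun n : ℕ => b * (n : ℝ) ^ 2 * (h^[n + 1] 0 - h^[n] 0))
      Filter.atTop (nhds 1)) :
    ∀ s ∈ Set.Ico (0:ℝ) 1, U (h s) = U s + 1 :=
  harmonic_functional_equation_general h U p b hp hpsum hpgf hmean hU hlocal
end
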